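/- For a finite strongly connected directed graph, any α∈[0,1), and distinct vertices x,y: κ_α(x,y)/(1−α) = inf over all 1-Lipschitz f of [ (1/(1−α))(1 − ∇_{xy}f) + ∇_{xy} ℒf ]. -/

import Mathlib

open Finset

variable {V : Type*} [Fintype V] [DecidableEq V]

/-- `π` is a coupling of `μ` and `ν`. -/
def IsCoupling (μ ν : V → ℝ) (π : V → V → ℝ) : Prop :=
  (∀ x y, 0 ≤ π x y) ∧ (∀ x, ∑ y, π x y = μ x) ∧ (∀ y, ∑ x, π x y = ν y)

/-- The L1-Wasserstein distance with cost `d`. -/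
noncomputable def W1 (d : V → V → ℝ) (μ ν : V → ℝ) : ℝ :=
  sInf {c | ∃ π, IsCoupling μ ν π ∧ c = ∑ x, ∑ y, π x y * d x y}

/-- The lazy distribution `μ_x^α`. -/
noncomputable def lazyDist (Pb : V → V → ℝ) (α : ℝ) (x : V) : V → ℝ :=
  fun z => if z = x then α else (1 - α) * Pb x z

/-- The `α`-Ricci curvature `κ_α(x,y) = 1 − W₁(μ_x^α, μ_y^α)/d(x,y)`. -/
noncomputable def kappaAlpha (d : V → V → ℝ) (Pb : V → V → ℝ) (α : ℝ) (x y : V) : ℝ :=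
  1 - W1 d (lazyDist Pb α x) (lazyDist Pb α y) / d x y

/-!
By Kantorovich–Rubinstein duality, `W₁(μ_x^α, μ_y^α)` is the supremum of
`∑ f μ_y^α − ∑ f μ_x^α` over `d`-Lipschitz `f`, while `∑_z f z μ_x^α(z) = f x − (1 − α) ℒf(x)`.
So the functional in the infimum is an antitone affine function of that pairing, and its infimum
is this function evaluated at `W₁`, i.e. `κ_α(x,y)/(1−α)`.

The nontrivial half of the duality is Farkas' lemma: if no coupling costs `c` or less, the image of
the probability simplex under `π ↦ (marginals of π − (μ, ν), c − cost π)` misses the positive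
cone. A separating functional yields potentials `g`, `h` with `h v − g u ≤ d u v` and
`∑ h ν − ∑ g μ = c`, and the inf-convolution of `g` with `d` is a Lipschitz function between them.
-/

open Finset

def IsOneLipschitz (d : V → V → ℝ) (f : V → ℝ) : Prop :=
  ∀ u v, f v - f u ≤ d u v

def transportCost (d : V → V → ℝ) (π : V → V → ℝ) : ℝ :=
  ∑ x, ∑ y, π x y * d x y

lemma strongDual_apply_eq_sum (ℓ : StrongDual ℝ ((V → ℝ) × (V → ℝ) × ℝ))
    (p : (V → ℝ) × (V → ℝ) × ℝ) :
    ℓ p = ∑ u, p.1 u * ℓ (Pi.single u 1, 0, 0) + ∑ v, p.2.1 v * ℓ (0, Pi.single v 1, 0)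
      + p.2.2 * ℓ (0, 0, 1) := by
  have hp : p = ∑ u, p.1 u • ((Pi.single u 1, 0, 0) : (V → ℝ) × (V → ℝ) × ℝ)
      + ∑ v, p.2.1 v • ((0, Pi.single v 1, 0) : (V → ℝ) × (V → ℝ) × ℝ)
      + p.2.2 • ((0, 0, 1) : (V → ℝ) × (V → ℝ) × ℝ) := by
    ext <;> simp [Prod.fst_sum, Prod.snd_sum, Finset.sum_apply, Pi.single_apply]
  conv_lhs => rw [hp]
  simp only [map_add, map_sum, map_smul, smul_eq_mul]

section Kantorovich

omit [DecidableEq V]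

variable (d : V → V → ℝ) {μ ν : V → ℝ}

lemma isCoupling_mul (hμ : ∀ v, 0 ≤ μ v) (hν : ∀ v, 0 ≤ ν v)
    (hμ1 : ∑ v, μ v = 1) (hν1 : ∑ v, ν v = 1) :
    IsCoupling μ ν fun u v => μ u * ν v :=
  ⟨fun u v => mul_nonneg (hμ u) (hν v), fun u => by rw [← mul_sum, hν1, mul_one],
    fun v => by rw [← sum_mul, hμ1, one_mul]⟩

lemma sum_mul_sub_sum_mul_le_transportCost {f : V → ℝ} (hf : IsOneLipschitz d f)
    {π : V → V → ℝ} (hπ : IsCoupling μ ν π) :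
    ∑ v, f v * ν v - ∑ u, f u * μ u ≤ transportCost d π := by
  have hsplit : ∑ v, f v * ν v - ∑ u, f u * μ u = ∑ u, ∑ v, π u v * (f v - f u) := by
    simp_rw [mul_sub, sum_sub_distrib, ← hπ.2.2, ← hπ.2.1, mul_sum]
    rw [sum_comm (f := fun v u => f v * π u v)]
    simp_rw [mul_comm]
  rw [hsplit, transportCost]
  gcongr with u _ v _
  · exact hπ.1 u v
  · exact hf u v

lemma sum_mul_sub_sum_mul_le_W1 (hμ : ∀ v, 0 ≤ μ v) (hν : ∀ v, 0 ≤ ν v)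
    (hμ1 : ∑ v, μ v = 1) (hν1 : ∑ v, ν v = 1) {f : V → ℝ} (hf : IsOneLipschitz d f) :
    ∑ v, f v * ν v - ∑ u, f u * μ u ≤ W1 d μ ν := by
  refine le_csInf ⟨_, _, isCoupling_mul hμ hν hμ1 hν1, rfl⟩ ?_
  rintro c ⟨π, hπ, rfl⟩
  exact sum_mul_sub_sum_mul_le_transportCost d hf hπ

lemma W1_le_transportCost (hd : ∀ u v, 0 ≤ d u v) {π : V → V → ℝ} (hπ : IsCoupling μ ν π) :
    W1 d μ ν ≤ transportCost d π := by
  refine csInf_le ⟨0, ?_⟩ ⟨π, hπ, rfl⟩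
  rintro c ⟨σ, hσ, rfl⟩
  exact sum_nonneg fun u _ => sum_nonneg fun v _ => mul_nonneg (hσ.1 u v) (hd u v)

lemma W1_le_of_le_marginals (hd : ∀ u v, 0 ≤ d u v)
    (hμ1 : ∑ v, μ v = 1) (hν1 : ∑ v, ν v = 1)
    {π : V × V → ℝ} (hπ : π ∈ stdSimplex ℝ (V × V))
    (hrow : ∀ u, μ u ≤ ∑ v, π (u, v)) (hcol : ∀ v, ν v ≤ ∑ u, π (u, v)) :
    W1 d μ ν ≤ ∑ u, ∑ v, π (u, v) * d u v := by
  have hmass : ∑ u, ∑ v, π (u, v) = 1 := by rw [← Fintype.sum_prod_type', hπ.2]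
  have hrow' : ∀ u, ∑ v, π (u, v) = μ u := fun u =>
    ((sum_eq_sum_iff_of_le fun u _ => hrow u).1 (by rw [hμ1, hmass]) u (mem_univ u)).symm
  have hcol' : ∀ v, ∑ u, π (u, v) = ν v := fun v =>
    ((sum_eq_sum_iff_of_le fun v _ => hcol v).1 (by rw [hν1, sum_comm, hmass]) v
      (mem_univ v)).symm
  exact W1_le_transportCost d hd ⟨fun u v => hπ.1 (u, v), hrow', hcol'⟩

lemma exists_isOneLipschitz_between (hrefl : ∀ x, d x x = 0)
    (htri : ∀ x y z, d x z ≤ d x y + d y z) {g h : V → ℝ} (hgh : ∀ u v, h v - g u ≤ d u v) :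
    ∃ f, IsOneLipschitz d f ∧ h ≤ f ∧ f ≤ g := by
  let f : V → ℝ := fun z => univ.inf' ⟨z, mem_univ z⟩ fun w => g w + d w z
  refine ⟨f, fun u v => ?_, fun z => le_inf' _ _ fun w _ => ?_, fun z => ?_⟩
  · obtain ⟨w, -, hw⟩ := exists_mem_eq_inf' ⟨u, mem_univ u⟩ fun w => g w + d w u
    have hfv : f v ≤ g w + d w v := inf'_le _ (mem_univ w)
    have hfu : f u = g w + d w u := hw
    linarith [htri w u v]
  · linarith [hgh w z]
  · simpa [hrefl] using inf'_le (fun w => g w + d w z) (mem_univ z)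

def marginalDefect (μ ν : V → ℝ) (c : ℝ) : (V × V → ℝ) →ᵃ[ℝ] (V → ℝ) × (V → ℝ) × ℝ :=
  ({ toFun := fun π => (fun u => ∑ v, π (u, v), fun v => ∑ u, π (u, v),
        -∑ u, ∑ v, π (u, v) * d u v)
     map_add' := fun π σ => by
       ext <;> simp [sum_add_distrib, add_mul, add_comm]
     map_smul' := fun a π => by
       ext <;> simp [mul_sum, mul_assoc] } : (V × V → ℝ) →ₗ[ℝ] _).toAffineMap
    + AffineMap.const ℝ _ (-(μ, ν, -c))

lemma marginalDefect_apply (μ ν : V → ℝ) (c : ℝ) (π : V × V → ℝ) :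
    marginalDefect d μ ν c π = (fun u => ∑ v, π (u, v) - μ u, fun v => ∑ u, π (u, v) - ν v,
      c - ∑ u, ∑ v, π (u, v) * d u v) := by
  ext <;> simp [marginalDefect, sub_eq_add_neg, add_comm]

lemma exists_potentials_of_lt_W1 (hd : ∀ u v, 0 ≤ d u v) (hμ : ∀ v, 0 ≤ μ v)
    (hν : ∀ v, 0 ≤ ν v) (hμ1 : ∑ v, μ v = 1) (hν1 : ∑ v, ν v = 1) {c : ℝ}
    (hc : c < W1 d μ ν) :
    ∃ g h : V → ℝ, (∀ u v, h v - g u ≤ d u v) ∧ c ≤ ∑ v, h v * ν v - ∑ u, g u * μ u := by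
  classical
  have hdisj : Disjoint (marginalDefect d μ ν c '' stdSimplex ℝ (V × V))
      (ProperCone.positive ℝ ((V → ℝ) × (V → ℝ) × ℝ)) := by
    rw [Set.disjoint_left]
    rintro _ ⟨π, hπ, rfl⟩ hpos
    simp only [SetLike.mem_coe, ProperCone.mem_positive, marginalDefect_apply, Prod.le_def,
      Prod.fst_zero, Prod.snd_zero, Pi.le_def, Pi.zero_apply, sub_nonneg] at hpos
    obtain ⟨hrow, hcol, hcost⟩ := hpos
    linarith [W1_le_of_le_marginals d hd hμ1 hν1 hπ hrow hcol]
  obtain ⟨ℓ, -, hℓ⟩ := ProperCone.hyperplane_separation _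
    ((convex_stdSimplex ℝ _).affine_image _)
    ((isCompact_stdSimplex ℝ _).image (AffineMap.continuous_of_finiteDimensional _)) hdisj
  set G : V → ℝ := fun u => ℓ (Pi.single u 1, 0, 0)
  set H : V → ℝ := fun v => ℓ (0, Pi.single v 1, 0)
  set t := ℓ (0, 0, 1)
  have hcorner : ∀ u v,
      G u + H v + c * t < ∑ w, μ w * G w + ∑ w, ν w * H w + d u v * t := by
    intro u v
    have := hℓ _ ⟨Pi.single (u, v) 1, single_mem_stdSimplex ℝ _, rfl⟩
    rw [strongDual_apply_eq_sum, marginalDefect_apply] at this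
    simp only [Pi.single_apply, Prod.mk.injEq, ite_and, sum_ite_irrel, sum_ite_eq', mem_univ,
      ↓reduceIte, sum_const_zero, ite_mul, one_mul, zero_mul, sub_mul, sum_sub_distrib] at this
    linarith
  have hprod : (c - transportCost d (fun u v => μ u * ν v)) * t < 0 := by
    have hmem : (fun i : V × V => μ i.1 * ν i.2) ∈ stdSimplex ℝ (V × V) :=
      ⟨fun i => mul_nonneg (hμ i.1) (hν i.2), by
        simp [Fintype.sum_prod_type, ← mul_sum, hν1, hμ1]⟩
    have := hℓ _ ⟨_, hmem, rfl⟩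
    rw [strongDual_apply_eq_sum, marginalDefect_apply] at this
    simpa [← mul_sum, ← sum_mul, hν1, hμ1, transportCost] using this
  have ht : 0 < t := pos_of_mul_neg_right hprod <| sub_nonpos.2 <|
    hc.le.trans (W1_le_transportCost d hd (isCoupling_mul hμ hν hμ1 hν1))
  set K := ∑ w, μ w * G w + ∑ w, ν w * H w - c * t
  refine ⟨fun u => -G u / t, fun v => (H v - K) / t, fun u v => ?_, le_of_eq ?_⟩
  · rw [div_sub_div_same, div_le_iff₀ ht]
    linarith [hcorner u v]
  · simp_rw [div_mul_eq_mul_div, ← sum_div, sub_mul, sum_sub_distrib, ← mul_sum, hν1]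
    field_simp
    simp only [K, sum_neg_distrib, mul_comm (G _), mul_comm (H _)]
    ring

theorem isLUB_W1 (hd : ∀ u v, 0 ≤ d u v) (hrefl : ∀ x, d x x = 0)
    (htri : ∀ x y z, d x z ≤ d x y + d y z) (hμ : ∀ v, 0 ≤ μ v) (hν : ∀ v, 0 ≤ ν v)
    (hμ1 : ∑ v, μ v = 1) (hν1 : ∑ v, ν v = 1) :
    IsLUB {r | ∃ f, IsOneLipschitz d f ∧ r = ∑ v, f v * ν v - ∑ u, f u * μ u}
      (W1 d μ ν) := by
  refine ⟨?_, fun b hb => le_of_forall_lt_imp_le_of_dense fun c hc => ?_⟩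
  · rintro _ ⟨f, hf, rfl⟩
    exact sum_mul_sub_sum_mul_le_W1 d hμ hν hμ1 hν1 hf
  obtain ⟨g, h, hgh, hc⟩ := exists_potentials_of_lt_W1 d hd hμ hν hμ1 hν1 hc
  obtain ⟨f, hf, hhf, hfg⟩ := exists_isOneLipschitz_between d hrefl htri hgh
  calc c ≤ ∑ v, h v * ν v - ∑ u, g u * μ u := hc
    _ ≤ ∑ v, f v * ν v - ∑ u, f u * μ u := by
      gcongr with v _ u _
      · exact hν v
      · exact hhf v
      · exact hμ u
      · exact hfg u
    _ ≤ b := hb ⟨f, hf, rfl⟩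

end Kantorovich

section LazyWalk

variable (Pb : V → V → ℝ) (α : ℝ)

omit [Fintype V] in
lemma lazyDist_nonneg (hPnn : ∀ x y, 0 ≤ Pb x y) (hα : α ∈ Set.Ico (0 : ℝ) 1) (x z : V) :
    0 ≤ lazyDist Pb α x z := by
  unfold lazyDist
  split_ifs
  · exact hα.1
  · exact mul_nonneg (by linarith [hα.2]) (hPnn x z)

lemma sum_mul_lazyDist (hPdiag : ∀ x, Pb x x = 0) (f : V → ℝ) (x : V) :
    ∑ z, f z * lazyDist Pb α x z = f x - (1 - α) * (f x - ∑ u, Pb x u * f u) := by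
  have hoff : ∀ z ∈ univ.erase x, f z * lazyDist Pb α x z = (1 - α) * (Pb x z * f z) :=
    fun z hz => by rw [lazyDist, if_neg (ne_of_mem_erase hz)]; ring
  rw [← add_sum_erase _ _ (mem_univ x), sum_congr rfl hoff, ← mul_sum,
    ← add_sum_erase _ _ (mem_univ x), hPdiag, lazyDist, if_pos rfl]
  ring

lemma sum_lazyDist (hProw : ∀ x, ∑ y, Pb x y = 1) (hPdiag : ∀ x, Pb x x = 0) (x : V) :
    ∑ z, lazyDist Pb α x z = 1 := by
  simpa [hProw] using sum_mul_lazyDist Pb α hPdiag 1 x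

end LazyWalk

theorem kappaAlpha_inf_formula_general (d : V → V → ℝ)
    (hnn : ∀ x y, 0 ≤ d x y)
    (hrefl : ∀ x, d x x = 0)
    (htri : ∀ x y z, d x z ≤ d x y + d y z)
    (Pb : V → V → ℝ) (hPnn : ∀ x y, 0 ≤ Pb x y) (hProw : ∀ x, ∑ y, Pb x y = 1)
    (hPdiag : ∀ x, Pb x x = 0)
    (α : ℝ) (hα : α ∈ Set.Ico (0:ℝ) 1)
    (x y : V) (hd : 0 < d x y) :
    kappaAlpha d Pb α x y / (1 - α)
      = sInf {r | ∃ f : V → ℝ, (∀ u v, f v - f u ≤ d u v) ∧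
          r = (1 / (1 - α)) * (1 - (f y - f x) / d x y)
              + ((f y - ∑ u, Pb y u * f u) - (f x - ∑ u, Pb x u * f u)) / d x y} := by
  have h1α : 0 < 1 - α := sub_pos.2 hα.2
  have hKR := isLUB_W1 d hnn hrefl htri (lazyDist_nonneg Pb α hPnn hα x)
    (lazyDist_nonneg Pb α hPnn hα y) (sum_lazyDist Pb α hProw hPdiag x)
    (sum_lazyDist Pb α hProw hPdiag y)
  set T := {r | ∃ f, IsOneLipschitz d f ∧
    r = ∑ v, f v * lazyDist Pb α y v - ∑ u, f u * lazyDist Pb α x u}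
  set φ : ℝ → ℝ := fun r => (1 - r / d x y) / (1 - α)
  have hφ : Antitone φ := fun a b hab => by
    simp only [φ]
    gcongr
  have hvalue : ∀ f : V → ℝ,
      φ (∑ v, f v * lazyDist Pb α y v - ∑ u, f u * lazyDist Pb α x u)
        = (1 / (1 - α)) * (1 - (f y - f x) / d x y)
          + ((f y - ∑ u, Pb y u * f u) - (f x - ∑ u, Pb x u * f u)) / d x y := fun f => by
    simp only [φ, sum_mul_lazyDist Pb α hPdiag]
    field_simp
    ring
  have himage : {r | ∃ f : V → ℝ, (∀ u v, f v - f u ≤ d u v) ∧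
      r = (1 / (1 - α)) * (1 - (f y - f x) / d x y)
        + ((f y - ∑ u, Pb y u * f u) - (f x - ∑ u, Pb x u * f u)) / d x y} = φ '' T := by
    ext r
    constructor
    · rintro ⟨f, hf, rfl⟩
      exact ⟨_, ⟨f, hf, rfl⟩, hvalue f⟩
    · rintro ⟨_, ⟨f, hf, rfl⟩, rfl⟩
      exact ⟨f, hf, hvalue f⟩
  have hT : T.Nonempty := ⟨_, 0, fun u v => by simpa using hnn u v, rfl⟩
  rw [himage, ← hφ.map_csSup_of_continuousAt (by fun_prop) hT hKR.bddAbove, hKR.csSup_eq hT]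
  rfl

/-- `κ_α(x,y)/(1−α)` equals the infimum over 1-Lipschitz `f` of
`(1/(1−α))(1 − ∇_{xy}f) + ∇_{xy}ℒf`. -/
theorem kappaAlpha_inf_formula [Nonempty V] (d : V → V → ℝ)
    (hnn : ∀ x y, 0 ≤ d x y)
    (hrefl : ∀ x, d x x = 0)
    (htri : ∀ x y z, d x z ≤ d x y + d y z)
    (Pb : V → V → ℝ) (hPnn : ∀ x y, 0 ≤ Pb x y) (hProw : ∀ x, ∑ y, Pb x y = 1)
    (hPdiag : ∀ x, Pb x x = 0)
    (α : ℝ) (hα : α ∈ Set.Ico (0:ℝ) 1)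
    (x y : V) (hxy : x ≠ y) (hd : 0 < d x y) :
    kappaAlpha d Pb α x y / (1 - α)
      = sInf {r | ∃ f : V → ℝ, (∀ u v, f v - f u ≤ d u v) ∧
          r = (1 / (1 - α)) * (1 - (f y - f x) / d x y)
              + ((f y - ∑ u, Pb y u * f u) - (f x - ∑ u, Pb x u * f u)) / d x y} :=
  kappaAlpha_inf_formula_general d hnn hrefl htri Pb hPnn hProw hPdiag α hα x y hd
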